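/- arXiv:1901.05481 — 3 statements merged into one kernel-verified Lean document; each statement's English description precedes it below -/
import Mathlib

section
/- Let L : (-∞, 0) → ℝ be locally Lipschitz and bounded from above. Then for every ε > 0 there exists t₀ ∈ (-∞, 0) such that L is differentiable at t₀, L'(t₀) ≥ -ε, and L(t₀) > sup_{t ∈ (-∞,0)} L(t) - ε. -/
/-!
Suppose the conclusion fails for some `ε`, and let `S` be the supremum. Then wherever `L` is
differentiable and `L > S - ε`, we have `L' < -ε`. Start at a point `a` with `L a > S - ε` and move
left: `L` grows at rate at least `ε`, hence stays above `S - ε`, so the derivative bound keeps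
applying and `L` eventually exceeds `S`. The rate estimate is the fundamental theorem of calculus
for Lipschitz (hence absolutely continuous) functions, which only needs `L' ≤ c` almost everywhere.
-/

open Set Filter Topology MeasureTheory

/-- `f` is locally Lipschitz on the set `s`: every point of `s` has a neighborhood
within `s` on which `f` is Lipschitz. -/
def LocallyLipschitzOnSet (f : ℝ → ℝ) (s : Set ℝ) : Prop :=
  ∀ x ∈ s, ∃ K : NNReal, ∃ u ∈ nhdsWithin x s, LipschitzOnWith K f u

theorem LocallyLipschitzOnSet.locallyLipschitzOn {f : ℝ → ℝ} {s : Set ℝ}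
    (hf : LocallyLipschitzOnSet f s) : LocallyLipschitzOn s f :=
  fun x hx => hf x hx

theorem LipschitzOnWith.sub_le_mul_of_deriv_le {f : ℝ → ℝ} {K : NNReal} {a b c : ℝ}
    (hab : a ≤ b) (hf : LipschitzOnWith K f (Icc a b))
    (H : ∀ t ∈ Ioo a b, DifferentiableAt ℝ f t → deriv f t ≤ c) :
    f b - f a ≤ c * (b - a) := by
  have hac : AbsolutelyContinuousOnInterval f a b :=
    (uIcc_of_le hab ▸ hf).absolutelyContinuousOnInterval
  have hderiv : ∀ᵐ t ∂volume.restrict (Icc a b), deriv f t ≤ c := by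
    rw [ae_restrict_iff' measurableSet_Icc]
    filter_upwards [hac.ae_differentiableAt, Measure.ae_ne volume a, Measure.ae_ne volume b]
      with t hdiff hta htb ht
    exact H t ⟨lt_of_le_of_ne ht.1 hta.symm, lt_of_le_of_ne ht.2 htb⟩
      (hdiff (uIcc_of_le hab ▸ ht))
  calc f b - f a = ∫ t in a..b, deriv f t := hac.integral_deriv_eq_sub.symm
    _ ≤ ∫ _ in a..b, c :=
      intervalIntegral.integral_mono_ae_restrict hab hac.intervalIntegrable_deriv
        intervalIntegrable_const hderiv
    _ = c * (b - a) := by rw [intervalIntegral.integral_const, smul_eq_mul, mul_comm]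

theorem LipschitzOnWith.sub_le_mul_of_deriv_le_on_superlevelSet {f : ℝ → ℝ} {K : NNReal}
    {a b c m : ℝ} (hab : a ≤ b) (hf : LipschitzOnWith K f (Icc a b)) (hc : c ≤ 0)
    (hm : m < f b) (H : ∀ t ∈ Ioo a b, DifferentiableAt ℝ f t → m < f t → deriv f t ≤ c) :
    f b - f a ≤ c * (b - a) := by
  -- Continuous induction leftwards from `b`: as `c ≤ 0`, the bound keeps `f` above `m`, so the
  -- derivative bound holds just left of any point where the bound holds, and extends it there.
  set s := {u | f b - c * (b - u) ≤ f u}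
  have hclosed : IsClosed (s ∩ Icc a b) := by
    rw [inter_comm]
    exact isClosed_Icc.isClosed_le (by fun_prop) hf.continuousOn
  have hstep : ∀ x ∈ s ∩ Ioc a b, ∀ y ∈ Iio x, (s ∩ Ico y x).Nonempty := by
    rintro x ⟨hxs, hax, hxb⟩ y hyx
    have hfx : m < f x := by
      have : c * (b - x) ≤ 0 := mul_nonpos_of_nonpos_of_nonneg hc (by linarith)
      simp only [s, mem_ofPred_eq] at hxs
      linarith
    have hcont : ContinuousWithinAt f (Iio x) x :=
      (hf.continuousOn x ⟨hax.le, hxb⟩).mono_of_mem_nhdsWithin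
        (Icc_mem_nhdsLT_of_mem ⟨hax, hxb⟩)
    obtain ⟨l, hlx, hl⟩ := mem_nhdsLT_iff_exists_Ioo_subset.1 (hcont.eventually (lt_mem_nhds hfx))
    set z := max (max y a) l
    have hzx : z < x := max_lt (max_lt hyx hax) hlx
    have haz : a ≤ z := le_max_of_le_left (le_max_right _ _)
    have hslope : f x - f z ≤ c * (x - z) :=
      (hf.mono (Icc_subset_Icc haz hxb)).sub_le_mul_of_deriv_le hzx.le fun t ht hdiff =>
        H t ⟨haz.trans_lt ht.1, ht.2.trans_le hxb⟩ hdiff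
          (hl ⟨(le_max_right _ _).trans_lt ht.1, ht.2⟩)
    refine ⟨z, ?_, le_max_of_le_left (le_max_left _ _), hzx⟩
    simp only [s, mem_ofPred_eq] at hxs ⊢
    linarith
  have ha : a ∈ s := hclosed.Icc_subset_of_forall_exists_lt (by simp [s]) hstep ⟨le_rfl, hab⟩
  simp only [s, mem_ofPred_eq] at ha
  linarith

/-- Let `L : (-∞, 0) → ℝ` be locally Lipschitz and bounded from above.
Then for every `ε > 0` there exists `t₀ ∈ (-∞, 0)` such that `L` is differentiable at `t₀`,
`L'(t₀) ≥ -ε`, and `L(t₀) > sup_{t ∈ (-∞,0)} L(t) - ε`. -/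
theorem stmt0 (L : ℝ → ℝ)
    (hlip : LocallyLipschitzOnSet L (Set.Iio (0 : ℝ)))
    (hbdd : BddAbove (L '' Set.Iio (0 : ℝ)))
    (ε : ℝ) (hε : 0 < ε) :
    ∃ t₀ ∈ Set.Iio (0 : ℝ), DifferentiableAt ℝ L t₀ ∧
      deriv L t₀ ≥ -ε ∧ L t₀ > sSup (L '' Set.Iio (0 : ℝ)) - ε := by
  set S := sSup (L '' Iio (0 : ℝ))
  by_contra! hcon
  obtain ⟨_, ⟨a, ha, rfl⟩, hLa⟩ :=
    exists_lt_of_lt_csSup (nonempty_Iio.image L) (sub_lt_self S hε)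
  have hLaS : L a ≤ S := le_csSup hbdd (mem_image_of_mem L ha)
  set b := a - (S - L a + 1) / ε
  have hba : b ≤ a := sub_le_self _ (div_nonneg (by linarith) hε.le)
  have hIcc : Icc b a ⊆ Iio 0 := fun t ht => ht.2.trans_lt ha
  obtain ⟨K, hK⟩ :=
    (hlip.locallyLipschitzOn.mono hIcc).exists_lipschitzOnWith_of_compact isCompact_Icc
  have hdescent : ∀ t ∈ Ioo b a, DifferentiableAt ℝ L t → S - ε < L t → deriv L t ≤ -ε := by
    intro t ht hdiff hLt
    by_contra! hderiv
    exact (hcon t (hIcc (Ioo_subset_Icc_self ht)) hdiff hderiv.le).not_gt hLt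
  have hgrowth := hK.sub_le_mul_of_deriv_le_on_superlevelSet hba (neg_nonpos.2 hε.le) hLa hdescent
  have hLbS : L b ≤ S := le_csSup hbdd (mem_image_of_mem L (hIcc ⟨le_rfl, hba⟩))
  have hgap : ε * (a - b) = S - L a + 1 := by rw [sub_sub_cancel, mul_div_cancel₀ _ hε.ne']
  linarith
end

section
/- Let L : (-∞, 0) → ℝ be locally Lipschitz and suppose L attains its supremum over (-∞, 0) at some point t₁ ∈ (-∞, 0). Then for every ε > 0 there exists t₀ ∈ (-∞, 0) such that L is differentiable at t₀, L'(t₀) ≥ 0, and |L(t₀) - L(t₁)| < ε. -/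
open MeasureTheory Set Filter Topology

theorem AbsolutelyContinuousOnInterval.exists_differentiableAt_slope_le_deriv {f : ℝ → ℝ}
    {a b : ℝ} (hf : AbsolutelyContinuousOnInterval f a b) (hab : a < b) :
    ∃ t ∈ Ioo a b, DifferentiableAt ℝ f t ∧ slope f a b ≤ deriv f t := by
  set μ := volume.restrict (Ioo a b)
  have hμ : μ ≠ 0 := by simp [μ, hab]
  have hgood : ∀ᵐ t ∂μ, t ∈ Ioo a b ∧ DifferentiableAt ℝ f t := by
    filter_upwards [ae_restrict_mem measurableSet_Ioo, ae_restrict_of_ae hf.ae_differentiableAt]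
      with t ht hdiff
    exact ⟨ht, hdiff (uIcc_of_le hab.le ▸ Ioo_subset_Icc_self ht)⟩
  have haverage : ⨍ t, deriv f t ∂μ = slope f a b := by
    rw [setAverage_eq, Real.volume_real_Ioo_of_le hab.le, ← integral_Ioc_eq_integral_Ioo,
      ← intervalIntegral.integral_of_le hab.le, hf.integral_deriv_eq_sub, slope_def_field,
      smul_eq_mul, div_eq_inv_mul]
  obtain ⟨t, ht, hle⟩ := exists_notMem_null_average_le hμ
    (hf.intervalIntegrable_deriv.1.mono_set Ioo_subset_Ioc_self) (ae_iff.1 hgood)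
  rw [mem_ofPred_eq, not_not] at ht
  exact ⟨t, ht.1, ht.2, haverage ▸ hle⟩

theorem LipschitzOnWith.frequently_differentiableAt_deriv_nonneg {f : ℝ → ℝ} {K : NNReal}
    {b : ℝ} {s : Set ℝ} (hs : s ∈ 𝓝[≤] b) (hf : LipschitzOnWith K f s)
    (hmax : ∀ᶠ x in 𝓝[<] b, f x ≤ f b) :
    ∃ᶠ t in 𝓝[<] b, DifferentiableAt ℝ f t ∧ 0 ≤ deriv f t := by
  rw [frequently_iff]
  intro U hU
  obtain ⟨l₁, hl₁, hIcc⟩ := mem_nhdsLE_iff_exists_Icc_subset.1 hs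
  obtain ⟨l₂, hl₂, hIoo⟩ := mem_nhdsLT_iff_exists_Ioo_subset.1 (inter_mem hU hmax)
  obtain ⟨a, ha, hab⟩ := exists_between (max_lt hl₁ hl₂)
  have hfa : f a ≤ f b := (hIoo ⟨(le_max_right _ _).trans_lt ha, hab⟩).2
  have hac : AbsolutelyContinuousOnInterval f a b :=
    LipschitzOnWith.absolutelyContinuousOnInterval <| hf.mono <| uIcc_of_le hab.le ▸
      (Icc_subset_Icc_left ((le_max_left _ _).trans ha.le)).trans hIcc
  obtain ⟨t, ht, hdiff, hslope⟩ := hac.exists_differentiableAt_slope_le_deriv hab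
  refine ⟨t, (hIoo ⟨?_, ht.2⟩).1, hdiff, ?_⟩
  · exact ((le_max_right _ _).trans_lt ha).trans ht.1
  · rw [slope_def_field] at hslope
    exact (div_nonneg (sub_nonneg.2 hfa) (sub_nonneg.2 hab.le)).trans hslope

/-- Let `L : (-∞, 0) → ℝ` be locally Lipschitz and suppose `L` attains its
supremum over `(-∞, 0)` at some `t₁ ∈ (-∞, 0)`. Then for every `ε > 0` there exists
`t₀ ∈ (-∞, 0)` such that `L` is differentiable at `t₀`, `L'(t₀) ≥ 0`, and `|L(t₀) - L(t₁)| < ε`. -/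
theorem stmt2 (L : ℝ → ℝ)
    (hlip : LocallyLipschitzOnSet L (Set.Iio (0 : ℝ)))
    (t₁ : ℝ) (ht₁ : t₁ ∈ Set.Iio (0 : ℝ))
    (hmax : ∀ t ∈ Set.Iio (0 : ℝ), L t ≤ L t₁)
    (ε : ℝ) (hε : 0 < ε) :
    ∃ t₀ ∈ Set.Iio (0 : ℝ), DifferentiableAt ℝ L t₀ ∧
      0 ≤ deriv L t₀ ∧ |L t₀ - L t₁| < ε := by
  have hneg : Iio (0 : ℝ) ∈ 𝓝 t₁ := isOpen_Iio.mem_nhds ht₁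
  obtain ⟨K, u, hu, hLu⟩ := hlip t₁ ht₁
  rw [nhdsWithin_eq_nhds.2 hneg] at hu
  have hclose : ∀ᶠ t in 𝓝 t₁, |L t - L t₁| < ε :=
    (hLu.continuousOn.continuousAt hu).eventually (Metric.ball_mem_nhds _ hε)
  have hfreq := hLu.frequently_differentiableAt_deriv_nonneg (nhdsWithin_le_nhds hu)
    (nhdsWithin_le_nhds (eventually_of_mem hneg hmax))
  obtain ⟨t₀, ⟨hdiff, hderiv⟩, ht₀, hclose₀⟩ :=
    (hfreq.and_eventually (nhdsWithin_le_nhds (inter_mem hneg hclose))).exists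
  exact ⟨t₀, ht₀, hdiff, hderiv, hclose₀⟩
end

section
/- Let n ≥ 0 and let S ⊆ ℝ^{n+1} be a nonempty set with the property that any two closed halfspaces containing S have parallel boundary hyperplanes; precisely: whenever w₁, w₂ ∈ ℝ^{n+1} are nonzero vectors and c₁, c₂ ∈ ℝ are such that S ⊆ {x : ⟨x, w₁⟩ ≤ c₁} and S ⊆ {x : ⟨x, w₂⟩ ≤ c₂}, the vectors w₁ and w₂ are linearly dependent. Then the closed convex hull of S is either (i) all of ℝ^{n+1}, or (ii) a closed halfspace {x : ⟨x, w⟩ ≤ c} for some unit vector w and some c ∈ ℝ, or (iii) a closed slab {x : c₁ ≤ ⟨x, w⟩ ≤ c₂} for some unit vector w and reals c₁ ≤ c₂ (which is a hyperplane when c₁ = c₂). -/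
open RealInnerProductSpace

lemma sep_halfspace {E : Type*} [NormedAddCommGroup E] [InnerProductSpace ℝ E]
    [CompleteSpace E] {s : Set E} (hconv : Convex ℝ s) (hclosed : IsClosed s)
    (hne : s.Nonempty) {x : E} (hx : x ∉ s) :
    ∃ (w : E) (c : ℝ), w ≠ 0 ∧ (∀ y ∈ s, ⟪y, w⟫ ≤ c) ∧ c < ⟪x, w⟫ := by
  obtain ⟨f, u, hfs, hfx⟩ := geometric_hahn_banach_closed_point hconv hclosed hx
  refine ⟨(InnerProductSpace.toDual ℝ E).symm f, u, ?_, ?_, ?_⟩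
  · intro h0
    obtain ⟨y, hy⟩ := hne
    have hf : f = 0 := by
      have := (InnerProductSpace.toDual ℝ E).apply_symm_apply f
      rw [h0, map_zero] at this
      exact this.symm
    have h1 := hfs y hy
    have h2 := hfx
    rw [hf] at h1 h2
    simp at h1 h2
    linarith
  · intro y hy
    rw [real_inner_comm, InnerProductSpace.toDual_symm_apply]
    exact (hfs y hy).le
  · rw [real_inner_comm, InnerProductSpace.toDual_symm_apply]
    exact hfx


/-- Let `S ⊆ ℝ^{n+1}` be nonempty such that any two closed halfspaces
containing `S` have parallel boundary hyperplanes (i.e. their outer normals are linearly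
dependent). Then the closed convex hull of `S` is all of `ℝ^{n+1}`, a closed halfspace, or a
closed slab `{x : c₁ ≤ ⟨x, w⟩ ≤ c₂}` (a hyperplane when `c₁ = c₂`). -/
theorem stmt7 {n : ℕ} (S : Set (EuclideanSpace ℝ (Fin (n + 1)))) (hS : S.Nonempty)
    (hpar : ∀ (w₁ w₂ : EuclideanSpace ℝ (Fin (n + 1))) (c₁ c₂ : ℝ), w₁ ≠ 0 → w₂ ≠ 0 →
      S ⊆ {x | ⟪x, w₁⟫ ≤ c₁} → S ⊆ {x | ⟪x, w₂⟫ ≤ c₂} →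
      ¬ LinearIndependent ℝ ![w₁, w₂]) :
    closure (convexHull ℝ S) = Set.univ ∨
    (∃ (w : EuclideanSpace ℝ (Fin (n + 1))) (c : ℝ), ‖w‖ = 1 ∧
      closure (convexHull ℝ S) = {x | ⟪x, w⟫ ≤ c}) ∨
    (∃ (w : EuclideanSpace ℝ (Fin (n + 1))) (c₁ c₂ : ℝ), ‖w‖ = 1 ∧ c₁ ≤ c₂ ∧
      closure (convexHull ℝ S) = {x | c₁ ≤ ⟪x, w⟫ ∧ ⟪x, w⟫ ≤ c₂}) := by
  set C := closure (convexHull ℝ S) with hCdef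
  have hCconv : Convex ℝ C := (convex_convexHull ℝ S).closure
  have hCclosed : IsClosed C := isClosed_closure
  have hSC : S ⊆ C := (subset_convexHull ℝ S).trans subset_closure
  have hCne : C.Nonempty := hS.mono hSC
  by_cases hH : ∃ w : EuclideanSpace ℝ (Fin (n + 1)), w ≠ 0 ∧ ∃ c : ℝ, ∀ y ∈ S, ⟪y, w⟫ ≤ c
  · right
    obtain ⟨w, hw, c, hc⟩ := hH
    set u := (‖w‖ : ℝ)⁻¹ • w with hudef
    have hu : ‖u‖ = 1 := by simpa using norm_smul_inv_norm (𝕜 := ℝ) hw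
    have hu0 : u ≠ 0 := fun h => by simp [h] at hu
    set f : EuclideanSpace ℝ (Fin (n + 1)) → ℝ := fun x => ⟪x, u⟫ with hfdef
    have hflin : IsLinearMap ℝ f := ⟨fun a b => inner_add_left a b u,
      fun t a => real_inner_smul_left a u t⟩
    have hfcont : Continuous f := Continuous.inner continuous_id continuous_const
    have hSf : ∀ y ∈ S, f y ≤ c * ‖w‖⁻¹ := by
      intro y hy
      have h : f y = ‖w‖⁻¹ * ⟪y, w⟫ := real_inner_smul_right y w _
      rw [h, mul_comm]
      exact mul_le_mul_of_nonneg_right (hc y hy) (by positivity)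
    have hbdd : BddAbove (f '' S) := ⟨c * ‖w‖⁻¹, by rintro _ ⟨y, hy, rfl⟩; exact hSf y hy⟩
    have hne' : (f '' S).Nonempty := hS.image f
    set c₂ := sSup (f '' S) with hc₂def
    have hSc₂ : ∀ y ∈ S, f y ≤ c₂ := fun y hy => le_csSup hbdd ⟨y, hy, rfl⟩
    have key : ∀ x, x ∉ C → ∃ t c' : ℝ, t ≠ 0 ∧ (∀ y ∈ S, t * f y ≤ c') ∧ c' < t * f x := by
      intro x hx
      obtain ⟨w', c', hw', hsep, hxsep⟩ := sep_halfspace hCconv hCclosed hCne hx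
      have hdep := hpar u w' c₂ c' hu0 hw' (fun y hy => hSc₂ y hy)
        (fun y hy => hsep y (hSC hy))
      rw [linearIndependent_fin2] at hdep
      push_neg at hdep
      obtain ⟨a, ha⟩ := hdep (by simpa using hw')
      have ha' : a • w' = u := by simpa using ha
      have ha0 : a ≠ 0 := by
        rintro rfl
        rw [zero_smul] at ha'
        exact hu0 ha'.symm
      have hw'eq : w' = a⁻¹ • u := by
        rw [← ha', smul_smul, inv_mul_cancel₀ ha0, one_smul]
      refine ⟨a⁻¹, c', inv_ne_zero ha0, ?_, ?_⟩
      · intro y hy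
        have h := hsep y (hSC hy)
        rwa [hw'eq, real_inner_smul_right] at h
      · have h := hxsep
        rwa [hw'eq, real_inner_smul_right] at h
    by_cases hB : BddBelow (f '' S)
    · right
      set c₁ := sInf (f '' S) with hc₁def
      have hSc₁ : ∀ y ∈ S, c₁ ≤ f y := fun y hy => csInf_le hB ⟨y, hy, rfl⟩
      obtain ⟨y₀, hy₀⟩ := hS
      refine ⟨u, c₁, c₂, hu, (hSc₁ y₀ hy₀).trans (hSc₂ y₀ hy₀), ?_⟩
      apply Set.Subset.antisymm
      · apply closure_minimal
        apply convexHull_min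
        · exact fun y hy => ⟨hSc₁ y hy, hSc₂ y hy⟩
        · exact (convex_halfSpace_ge hflin c₁).inter (convex_halfSpace_le hflin c₂)
        · exact (isClosed_le continuous_const hfcont).inter (isClosed_le hfcont continuous_const)
      · intro x hx
        by_contra hxC
        obtain ⟨t, c', ht, h1, h2⟩ := key x hxC
        rcases ht.lt_or_gt with htneg | htpos
        · have hle : ∀ y ∈ S, c' / t ≤ f y := fun y hy =>
            (div_le_iff_of_neg htneg).mpr (by linarith [h1 y hy, mul_comm (f y) t])
          have hcc : c' / t ≤ c₁ := le_csInf hne' (by rintro _ ⟨y, hy, rfl⟩; exact hle y hy)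
          have h3 : t * c₁ ≤ c' := by
            rw [div_le_iff_of_neg htneg] at hcc
            linarith [mul_comm c₁ t]
          have h4 : t * f x ≤ t * c₁ := mul_le_mul_of_nonpos_left hx.1 htneg.le
          linarith
        · have hle : ∀ y ∈ S, f y ≤ c' / t := fun y hy =>
            (le_div_iff₀ htpos).mpr (by linarith [h1 y hy, mul_comm (f y) t])
          have hcc : c₂ ≤ c' / t := csSup_le hne' (by rintro _ ⟨y, hy, rfl⟩; exact hle y hy)
          have h3 : t * c₂ ≤ c' := by
            rw [le_div_iff₀ htpos] at hcc
            linarith [mul_comm c₂ t]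
          have h4 : t * f x ≤ t * c₂ := mul_le_mul_of_nonneg_left hx.2 htpos.le
          linarith
    · left
      refine ⟨u, c₂, hu, ?_⟩
      apply Set.Subset.antisymm
      · apply closure_minimal
        apply convexHull_min
        · exact fun y hy => hSc₂ y hy
        · exact convex_halfSpace_le hflin c₂
        · exact isClosed_le hfcont continuous_const
      · intro x hx
        by_contra hxC
        obtain ⟨t, c', ht, h1, h2⟩ := key x hxC
        rcases ht.lt_or_gt with htneg | htpos
        · apply hB
          refine ⟨c' / t, ?_⟩
          rintro _ ⟨y, hy, rfl⟩
          exact (div_le_iff_of_neg htneg).mpr (by linarith [h1 y hy, mul_comm (f y) t])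
        · have hle : ∀ y ∈ S, f y ≤ c' / t := fun y hy =>
            (le_div_iff₀ htpos).mpr (by linarith [h1 y hy, mul_comm (f y) t])
          have hcc : c₂ ≤ c' / t := csSup_le hne' (by rintro _ ⟨y, hy, rfl⟩; exact hle y hy)
          have h3 : t * c₂ ≤ c' := by
            rw [le_div_iff₀ htpos] at hcc
            linarith [mul_comm c₂ t]
          have h4 : t * f x ≤ t * c₂ := mul_le_mul_of_nonneg_left hx htpos.le
          linarith
  · left
    rw [Set.eq_univ_iff_forall]
    intro x
    by_contra hxC
    obtain ⟨w', c', hw', hsep, _⟩ := sep_halfspace hCconv hCclosed hCne hxC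
    exact hH ⟨w', hw', c', fun y hy => hsep y (hSC hy)⟩
end
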